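/- arXiv:2301.05284 — 4 statements merged into one kernel-verified Lean document; each statement's English description precedes it below -/
import Mathlib

section
/- Let f : ℝ → ℝ be twice continuously differentiable with f'' bounded and continuous. Then for each fixed x, (G(t)f)(x) = f(x) + t·f''(x) + o(t) as t → 0⁺, where (G(t)f)(x) = (1/2)f(x) + (1/4)f(x + 2√t) + (1/4)f(x - 2√t). In particular, lim_{t→0⁺} ((G(t)f)(x) - f(x))/t = f''(x). -/
/-!
By Taylor's theorem with Peano remainder, the odd terms cancel in the symmetric second difference,
so `f (x + h) + f (x - h) - 2 f x = h² f'' x + o(h²)`. Now `G(t) f x - f x` is a quarter of this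
difference at `h = 2 √t`, where `h² = 4 t`.
-/

open Real Asymptotics Filter Topology

section SecondDifference

variable {E : Type*} [NormedAddCommGroup E] [NormedSpace ℝ E] {f : ℝ → E}

theorem taylor_two_isLittleO (hf : ContDiff ℝ 2 f) (x : ℝ) :
    (fun h : ℝ => f (x + h) - f x - h • deriv f x - (h ^ 2 / 2) • deriv (deriv f) x)
      =o[𝓝 0] fun h => h ^ 2 := by
  have hx : Tendsto (fun h : ℝ => x + h) (𝓝 0) (𝓝 x) := by
    simpa using (continuous_const_add x).tendsto 0
  have := (taylor_isLittleO_univ (x₀ := x) hf).comp_tendsto hx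
  norm_num [Function.comp_def, taylor_within_apply, Finset.sum_range_succ,
    iteratedDerivWithin_univ, iteratedDeriv_succ, sub_sub, div_eq_inv_mul] at this ⊢
  exact this

theorem symm_second_diff_isLittleO (hf : ContDiff ℝ 2 f) (x : ℝ) :
    (fun h : ℝ => f (x + h) + f (x - h) - (2 : ℝ) • f x - h ^ 2 • deriv (deriv f) x)
      =o[𝓝 0] fun h => h ^ 2 := by
  have hneg := (taylor_two_isLittleO hf x).comp_tendsto (continuous_neg.tendsto' 0 0 neg_zero)
  refine ((taylor_two_isLittleO hf x).add (hneg.congr_right fun h => by simp)).congr_left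
    fun h => ?_
  simp only [Function.comp_apply, ← sub_eq_add_neg, neg_sq]
  module

end SecondDifference

theorem stmt_2_general (f : ℝ → ℝ) (hf : ContDiff ℝ 2 f) (x : ℝ) :
    (fun t : ℝ => ((1/2) * f x + (1/4) * f (x + 2 * Real.sqrt t)
        + (1/4) * f (x - 2 * Real.sqrt t)) - f x - t * deriv (deriv f) x)
      =o[nhdsWithin 0 (Set.Ioi 0)] (fun t : ℝ => t) ∧
    Tendsto (fun t : ℝ => (((1/2) * f x + (1/4) * f (x + 2 * Real.sqrt t)
        + (1/4) * f (x - 2 * Real.sqrt t)) - f x) / t)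
      (nhdsWithin 0 (Set.Ioi 0)) (nhds (deriv (deriv f) x)) := by
  have hsqrt : Tendsto (fun t : ℝ => 2 * √t) (𝓝[>] 0) (𝓝 0) :=
    ((continuous_const.mul continuous_sqrt).tendsto' 0 0 (by simp)).mono_left nhdsWithin_le_nhds
  have hsq : (fun t : ℝ => (2 * √t) ^ 2) =ᶠ[𝓝[>] 0] fun t => 4 * t := by
    filter_upwards [self_mem_nhdsWithin] with t (ht : 0 < t)
    rw [mul_pow, sq_sqrt ht.le]
    norm_num
  have hmain : (fun t : ℝ => ((1/2) * f x + (1/4) * f (x + 2 * √t)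
      + (1/4) * f (x - 2 * √t)) - f x - t * deriv (deriv f) x) =o[𝓝[>] 0] fun t => t := by
    refine ((((symm_second_diff_isLittleO hf x).comp_tendsto hsqrt).trans_isBigO
      (hsq.trans_isBigO (isBigO_const_mul_self 4 id _))).const_mul_left (1 / 4)).congr' ?_ .rfl
    filter_upwards [hsq] with t ht
    simp only [Function.comp_apply, smul_eq_mul, ht]
    ring
  refine ⟨hmain, ?_⟩
  have hslope := hmain.tendsto_div_nhds_zero.add_const (deriv (deriv f) x)
  rw [zero_add] at hslope
  refine hslope.congr' ?_
  filter_upwards [self_mem_nhdsWithin] with t (ht : 0 < t)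
  field_simp
  ring

theorem stmt_2 (f : ℝ → ℝ) (hf : ContDiff ℝ 2 f) (M : ℝ)
    (hM : ∀ x, |deriv (deriv f) x| ≤ M) (x : ℝ) :
    (fun t : ℝ => ((1/2) * f x + (1/4) * f (x + 2 * Real.sqrt t)
        + (1/4) * f (x - 2 * Real.sqrt t)) - f x - t * deriv (deriv f) x)
      =o[nhdsWithin 0 (Set.Ioi 0)] (fun t : ℝ => t) ∧
    Tendsto (fun t : ℝ => (((1/2) * f x + (1/4) * f (x + 2 * Real.sqrt t)
        + (1/4) * f (x - 2 * Real.sqrt t)) - f x) / t)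
      (nhdsWithin 0 (Set.Ioi 0)) (nhds (deriv (deriv f) x)) :=
  stmt_2_general f hf x
end

section
/- Let f : ℝ → ℝ be four times continuously differentiable with f⁽⁴⁾ bounded and continuous. Then for each fixed x, (S(t)f)(x) = f(x) + t·f''(x) + (t²/2)·f⁽⁴⁾(x) + o(t²) as t → 0⁺, where (S(t)f)(x) = (2/3)f(x) + (1/6)f(x + √(6t)) + (1/6)f(x - √(6t)). -/
/-!
Adding the fourth-order Taylor expansions of `f (x + h)` and `f (x - h)` cancels the odd terms:
`f (x + h) + f (x - h) = 2 f x + h² f'' x + (h⁴ / 12) f⁽⁴⁾ x + o(h⁴)`.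
Substituting `h = √(6t)`, so that `h² = 6t` and `h⁴ = 36t²`, and multiplying by `1/6` gives the
claim.
-/

open Real Asymptotics Filter Topology

open Nat in
theorem taylor_isLittleO_add_univ {E : Type*} [NormedAddCommGroup E] [NormedSpace ℝ E]
    {f : ℝ → E} {n : ℕ} (hf : ContDiff ℝ n f) (x : ℝ) :
    (fun h ↦ f (x + h)
        - ∑ k ∈ Finset.range (n + 1), ((k ! : ℝ)⁻¹ * h ^ k) • iteratedDeriv k f x)
      =o[𝓝 0] fun h ↦ h ^ n := by
  have hx : Tendsto (fun h : ℝ ↦ x + h) (𝓝 0) (𝓝 x) := by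
    simpa using (continuous_const_add x).tendsto 0
  simpa [Function.comp_def, taylor_within_apply, iteratedDerivWithin_univ] using
    (taylor_isLittleO_univ hf (x₀ := x)).comp_tendsto hx

theorem taylor_isLittleO_add_add_sub_four {E : Type*} [NormedAddCommGroup E] [NormedSpace ℝ E]
    {f : ℝ → E} (hf : ContDiff ℝ 4 f) (x : ℝ) :
    (fun h ↦ f (x + h) + f (x - h) - (2 : ℝ) • f x - h ^ 2 • iteratedDeriv 2 f x
        - (h ^ 4 / 12) • iteratedDeriv 4 f x) =o[𝓝 0] fun h ↦ h ^ 4 := by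
  have hneg : Tendsto (fun h : ℝ ↦ -h) (𝓝 0) (𝓝 0) := by
    simpa using (continuous_neg (G := ℝ)).tendsto 0
  have hplus := taylor_isLittleO_add_univ hf x
  have hminus := (taylor_isLittleO_add_univ hf x).comp_tendsto hneg
  simp only [Function.comp_def, (by decide : Even 4).neg_pow] at hminus
  refine (hplus.add hminus).congr (fun h ↦ ?_) fun _ ↦ rfl
  simp only [Finset.sum_range_succ, Finset.sum_range_zero, Nat.factorial, iteratedDeriv_zero]
  rw [← sub_eq_add_neg]
  module

theorem stmt_3_general (f : ℝ → ℝ) (hf : ContDiff ℝ 4 f) (x : ℝ) :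
    (fun t : ℝ => ((2/3) * f x + (1/6) * f (x + Real.sqrt (6 * t))
        + (1/6) * f (x - Real.sqrt (6 * t)))
        - f x - t * iteratedDeriv 2 f x - (t ^ 2 / 2) * iteratedDeriv 4 f x)
      =o[nhdsWithin 0 (Set.Ioi 0)] (fun t : ℝ => t ^ 2) := by
  have hsqrt : Tendsto (fun t : ℝ ↦ √(6 * t)) (𝓝[>] 0) (𝓝 0) :=
    ((continuous_const_mul 6).sqrt.tendsto' 0 0 (by simp)).mono_left nhdsWithin_le_nhds
  have hsq : ∀ᶠ t in 𝓝[>] (0 : ℝ), √(6 * t) ^ 2 = 6 * t := by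
    filter_upwards [self_mem_nhdsWithin] with t (ht : 0 < t)
    exact sq_sqrt (by positivity)
  have hfourth : ∀ t : ℝ, √(6 * t) ^ 4 = (√(6 * t) ^ 2) ^ 2 := fun t ↦ by ring
  have key :=
    ((taylor_isLittleO_add_add_sub_four hf x).comp_tendsto hsqrt).const_mul_left (1 / 6)
  refine (key.congr' ?_ ?_).trans_isBigO (isBigO_const_mul_self 36 _ _)
  · filter_upwards [hsq] with t ht
    simp only [Function.comp_apply, smul_eq_mul, hfourth, ht]
    ring
  · filter_upwards [hsq] with t ht
    simp only [Function.comp_apply, hfourth, ht]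
    ring

theorem stmt_3 (f : ℝ → ℝ) (hf : ContDiff ℝ 4 f) (M : ℝ)
    (hM : ∀ x, |iteratedDeriv 4 f x| ≤ M) (x : ℝ) :
    (fun t : ℝ => ((2/3) * f x + (1/6) * f (x + Real.sqrt (6 * t))
        + (1/6) * f (x - Real.sqrt (6 * t)))
        - f x - t * iteratedDeriv 2 f x - (t ^ 2 / 2) * iteratedDeriv 4 f x)
      =o[nhdsWithin 0 (Set.Ioi 0)] (fun t : ℝ => t ^ 2) :=
  stmt_3_general f hf x
end

section
/- Let f : ℝ → ℝ be twice continuously differentiable with bounded continuous f''. The operator C(t) defined by (C(t)f)(x) = (2/3)f(x) + (1/6)f(x + √(6t)) + (1/6)f(x - √(6t)) satisfies lim_{t→0⁺} ((C(t)f)(x) - f(x))/t = f''(x) for every x. -/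
/-!
Put `h = √(6t)`. Then `(C(t)f)(x) - f(x) = (f(x + h) + f(x - h) - 2 f(x)) / 6` and
`t = h² / 6`, so the quotient is the symmetric second difference quotient of `f` at `x`.
By L'Hôpital's rule its limit is that of the symmetric difference quotient
`(f'(x + h) - f'(x - h)) / 2h`, which is `f''(x)`.
-/

open Real Filter Topology

theorem HasDerivAt.tendsto_symmetric_slope_zero {g : ℝ → ℝ} {g' x : ℝ}
    (hg : HasDerivAt g g' x) :
    Tendsto (fun h => (g (x + h) - g (x - h)) / (2 * h)) (𝓝[≠] 0) (𝓝 g') := by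
  have hneg : Tendsto (fun h : ℝ => -h) (𝓝[≠] 0) (𝓝[≠] 0) :=
    (continuous_neg.tendsto' 0 0 neg_zero).inf
      (tendsto_principal_principal.2 fun _ hh => neg_ne_zero.2 hh)
  have hsum := (hg.tendsto_slope_zero.add (hg.tendsto_slope_zero.comp hneg)).div_const 2
  rw [← two_mul, mul_div_cancel_left₀ _ two_ne_zero] at hsum
  refine hsum.congr' (eventually_nhdsWithin_of_forall fun h (hh : h ≠ 0) => ?_)
  simp only [Function.comp_apply, smul_eq_mul, ← sub_eq_add_neg]
  field_simp
  ring

theorem tendsto_symmetric_second_difference_div_sq {f : ℝ → ℝ} {f'' x : ℝ}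
    (hf : Differentiable ℝ f) (hf' : HasDerivAt (deriv f) f'' x) :
    Tendsto (fun h => (f (x + h) + f (x - h) - 2 * f x) / h ^ 2) (𝓝[≠] 0) (𝓝 f'') := by
  have hderiv : ∀ h, HasDerivAt (fun h => f (x + h) + f (x - h) - 2 * f x)
      (deriv f (x + h) - deriv f (x - h)) h := fun h => by
    have hsum := ((hf _).hasDerivAt.comp h ((hasDerivAt_id h).const_add x)).add
      ((hf _).hasDerivAt.comp h ((hasDerivAt_id h).const_sub x))
    simpa [sub_eq_add_neg] using hsum.sub_const (2 * f x)
  have hcont : Continuous fun h => f (x + h) + f (x - h) - 2 * f x := by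
    have hf_cont := hf.continuous
    fun_prop
  refine HasDerivAt.lhopital_zero_nhdsNE (g' := fun h => 2 * h) (.of_forall hderiv)
    (.of_forall fun h => by simpa using hasDerivAt_pow 2 h)
    (eventually_nhdsWithin_of_forall fun h hh => mul_ne_zero two_ne_zero hh) ?_ ?_
    hf'.tendsto_symmetric_slope_zero
  · exact (hcont.tendsto' 0 0 (by simp only [add_zero, sub_zero]; ring)).mono_left
      nhdsWithin_le_nhds
  · exact ((continuous_pow 2).tendsto' (0 : ℝ) 0 (by simp)).mono_left nhdsWithin_le_nhds

theorem stmt_4_general (f : ℝ → ℝ) (hf : ContDiff ℝ 2 f) (x : ℝ) :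
    Tendsto (fun t : ℝ => (((2/3) * f x + (1/6) * f (x + Real.sqrt (6 * t))
        + (1/6) * f (x - Real.sqrt (6 * t))) - f x) / t)
      (nhdsWithin 0 (Set.Ioi 0)) (nhds (deriv (deriv f) x)) := by
  have hf₁ : Differentiable ℝ f := hf.differentiable (by norm_num)
  have hf₂ : Differentiable ℝ (deriv f) := (hf.iterate_deriv' 1 1).differentiable (by norm_num)
  have hsqrt : Tendsto (fun t => √(6 * t)) (𝓝[>] 0) (𝓝[≠] 0) :=
    tendsto_nhdsWithin_iff.2
      ⟨((continuous_const.mul continuous_id).sqrt.tendsto' 0 0 (by simp)).mono_left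
          nhdsWithin_le_nhds,
        eventually_nhdsWithin_of_forall fun t (ht : 0 < t) => (sqrt_pos.2 (by positivity)).ne'⟩
  refine ((tendsto_symmetric_second_difference_div_sq hf₁ (hf₂ x).hasDerivAt).comp hsqrt).congr'
    ?_
  filter_upwards [self_mem_nhdsWithin] with t (ht : 0 < t)
  have hsq : √(6 * t) ^ 2 = 6 * t := sq_sqrt (by positivity)
  simp only [Function.comp_apply, hsq]
  field_simp
  ring

theorem stmt_4 (f : ℝ → ℝ) (hf : ContDiff ℝ 2 f) (M : ℝ)
    (hM : ∀ x, |deriv (deriv f) x| ≤ M) (x : ℝ) :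
    Tendsto (fun t : ℝ => (((2/3) * f x + (1/6) * f (x + Real.sqrt (6 * t))
        + (1/6) * f (x - Real.sqrt (6 * t))) - f x) / t)
      (nhdsWithin 0 (Set.Ioi 0)) (nhds (deriv (deriv f) x)) :=
  stmt_4_general f hf x
end

section
/- Let g : [0,∞) → ℝ satisfy g(0) = 1, g differentiable at 0 with g'(0) = l, and |g(s)| ≤ e^{ω s} for some ω ∈ ℝ and all s ≥ 0. Then for every T > 0, sup_{t ∈ [0,T]} |e^{tl} − g(t/n)ⁿ| → 0 as n → ∞. -/
/-!
Write `s = t / n`. Both `g s` and `exp (s * l)` are bounded by `exp ((|ω| + |l|) * s)`, so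
telescoping `a ^ n - b ^ n` gives `|g s ^ n - exp (t * l)| ≤ n * exp ((|ω| + |l|) * t) * |g s - exp (s * l)|`.
Since `g` and `s ↦ exp (s * l)` agree to first order at `0`, the last factor is `o(s) = o(1 / n)`
uniformly for `t ∈ [0, T]`, and the factor `n` is absorbed.
-/

open Real Filter Topology Asymptotics

lemma abs_pow_sub_exp_mul_pow_le {g : ℝ → ℝ} {ω s : ℝ} (l : ℝ) (hgs : |g s| ≤ exp (ω * s))
    (hs : 0 ≤ s) (n : ℕ) :
    |g s ^ n - exp (s * l) ^ n| ≤ |g s - exp (s * l)| * n * exp ((|ω| + |l|) * (n * s)) := by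
  set M := exp ((|ω| + |l|) * s)
  have hgM : |g s| ≤ M :=
    hgs.trans (exp_le_exp.mpr (by gcongr; exact (le_abs_self ω).trans (by simp)))
  have heM : |exp (s * l)| ≤ M := by
    rw [abs_of_pos (exp_pos _)]
    exact exp_le_exp.mpr (by nlinarith [le_abs_self l, abs_nonneg ω])
  have hM1 : 1 ≤ M := one_le_exp (by positivity)
  calc |g s ^ n - exp (s * l) ^ n|
      ≤ |g s - exp (s * l)| * n * max |g s| |exp (s * l)| ^ (n - 1) := abs_pow_sub_pow_le ..
    _ ≤ |g s - exp (s * l)| * n * M ^ n := by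
        gcongr
        exact (pow_le_pow_left₀ (by positivity) (max_le hgM heM) _).trans
          (pow_le_pow_right₀ hM1 (n.sub_le 1))
    _ = |g s - exp (s * l)| * n * exp ((|ω| + |l|) * (n * s)) := by
        rw [← exp_nat_mul]; ring_nf

lemma isLittleO_sub_exp_mul {g : ℝ → ℝ} {l : ℝ} {u : Set ℝ} (hg0 : g 0 = 1)
    (hg : HasDerivWithinAt g l u 0) :
    (fun s => g s - exp (s * l)) =o[𝓝[u] 0] fun s => s := by
  have he : HasDerivAt (fun s : ℝ => exp (s * l)) l 0 := by
    simpa using (hasDerivAt_mul_const (x := (0 : ℝ)) l).exp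
  simpa [hg0] using hasDerivWithinAt_iff_isLittleO.mp (hg.sub he.hasDerivWithinAt)

lemma eventually_forall_Icc_div_of_eventually_nhdsGE {P : ℝ → Prop}
    (hP : ∀ᶠ s in 𝓝[≥] 0, P s) (T : ℝ) :
    ∀ᶠ n : ℕ in atTop, ∀ t ∈ Set.Icc 0 T, P (t / n) := by
  obtain ⟨δ, hδ, hδP⟩ := mem_nhdsGE_iff_exists_Ico_subset.mp hP
  filter_upwards [(tendsto_const_div_atTop_nhds_zero_nat T).eventually (gt_mem_nhds hδ)]
    with n hn t ht
  exact hδP ⟨div_nonneg ht.1 n.cast_nonneg,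
    (div_le_div_of_nonneg_right ht.2 n.cast_nonneg).trans_lt hn⟩

theorem tendstoUniformlyOn_pow_div_of_hasDerivWithinAt {g : ℝ → ℝ} {l ω : ℝ} (hg0 : g 0 = 1)
    (hg : HasDerivWithinAt g l (Set.Ici 0) 0) (hN : ∀ s : ℝ, 0 ≤ s → |g s| ≤ exp (ω * s))
    (T : ℝ) :
    TendstoUniformlyOn (fun (n : ℕ) t => g (t / n) ^ n) (fun t => exp (t * l)) atTop
      (Set.Icc 0 T) := by
  rw [Metric.tendstoUniformlyOn_iff]
  intro ε hε
  set K := |ω| + |l|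
  obtain ⟨c, hc, hcε⟩ := exists_pos_mul_lt hε (T * exp (K * T))
  filter_upwards [eventually_ne_atTop 0,
    eventually_forall_Icc_div_of_eventually_nhdsGE ((isLittleO_sub_exp_mul hg0 hg).def hc) T]
    with n hn0 hn t ht
  have hn' : (n : ℝ) ≠ 0 := Nat.cast_ne_zero.mpr hn0
  have hs : 0 ≤ t / n := div_nonneg ht.1 n.cast_nonneg
  have hns : n * (t / n) = t := mul_div_cancel₀ t hn'
  have hsmall : |g (t / n) - exp (t / n * l)| ≤ c * (t / n) := by
    simpa only [Real.norm_eq_abs, abs_of_nonneg hs] using hn t ht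
  calc dist (exp (t * l)) (g (t / n) ^ n)
      = |g (t / n) ^ n - exp (t / n * l) ^ n| := by
        rw [dist_comm, Real.dist_eq, ← exp_nat_mul, ← mul_assoc, hns]
    _ ≤ |g (t / n) - exp (t / n * l)| * n * exp (K * t) := by
        simpa only [hns] using abs_pow_sub_exp_mul_pow_le l (hN _ hs) hs n
    _ ≤ c * (t / n) * n * exp (K * t) := by gcongr
    _ = c * (t * exp (K * t)) := by field_simp
    _ ≤ c * (T * exp (K * T)) := by
        gcongr
        exacts [ht.1.trans ht.2, ht.2, ht.2]
    _ < ε := by rwa [mul_comm]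

lemma tendsto_iSup_dist_of_tendstoUniformlyOn {ι α β : Type*} [PseudoMetricSpace β]
    {F : ι → α → β} {f : α → β} {p : Filter ι} {s : Set α} (h : TendstoUniformlyOn F f p s) :
    Tendsto (fun i => ⨆ x : s, dist (f x) (F i x)) p (𝓝 0) := by
  rw [Metric.tendsto_nhds]
  intro ε hε
  filter_upwards [Metric.tendstoUniformlyOn_iff.mp h (ε / 2) (half_pos hε)] with i hi
  have hsup : ⨆ x : s, dist (f x) (F i x) ≤ ε / 2 :=
    Real.iSup_le (fun x => (hi x x.2).le) (half_pos hε).le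
  rw [Real.dist_eq, sub_zero, abs_of_nonneg (Real.iSup_nonneg fun _ => dist_nonneg)]
  linarith

theorem stmt_6 (g : ℝ → ℝ) (l ω : ℝ) (hg0 : g 0 = 1)
    (hg : HasDerivWithinAt g l (Set.Ici 0) 0)
    (hN : ∀ s : ℝ, 0 ≤ s → |g s| ≤ Real.exp (ω * s)) :
    ∀ T : ℝ, 0 < T →
      Tendsto (fun n : ℕ => ⨆ t : Set.Icc (0:ℝ) T, |Real.exp (t * l) - (g (t / n)) ^ n|)
        atTop (nhds 0) := by
  intro T _
  simpa only [Real.dist_eq] using tendsto_iSup_dist_of_tendstoUniformlyOn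
    (tendstoUniformlyOn_pow_div_of_hasDerivWithinAt hg0 hg hN T)
end
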